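/- The coproduct ϖ satisfies ϖ ∘ B₊ = (id ⊗ B₊) ∘ ϖ + B₊ ⊗ ∘ on tensor products of non-degenerate planar trees, i.e., for b₁,…,b_r non-degenerate planar trees (r ≥ 2), ϖ(B₊(b₁,…,b_r)) = (id ⊗ B₊)(ϖ(b₁ • ⋯ • b_r)) + B₊(b₁,…,b_r) ⊗ ∘. -/

import Mathlib

inductive PTree : Type
  | node : List PTree → PTree

namespace PTree

instance : Inhabited PTree := ⟨node []⟩

/-- the single-leaf tree ∘ -/
def leaf : PTree := node []

/-- number of leaves ‖b‖ -/
def leaves : PTree → ℕ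
  | node ts => if ts.isEmpty then 1 else (ts.attach.map fun t => leaves t.1).sum
decreasing_by simp only [PTree.node.sizeOf_spec]; have := List.sizeOf_lt_of_mem t.2; omega


/-- number of internal vertices |b| -/
def internals : PTree → ℕ
  | node ts => if ts.isEmpty then 0 else 1 + (ts.attach.map fun t => internals t.1).sum
decreasing_by simp only [PTree.node.sizeOf_spec]; have := List.sizeOf_lt_of_mem t.2; omega


/-- total number of vertices N(b) -/
def Ntot (b : PTree) : ℕ := b.leaves + b.internals

/-- non-degenerate: every internal vertex has at least two children -/
def ND : PTree → Prop
  | node ts => ts.isEmpty ∨ (2 ≤ ts.length ∧ ∀ t ∈ ts.attach, ND t.1)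
decreasing_by simp only [PTree.node.sizeOf_spec]; have := List.sizeOf_lt_of_mem t.2; omega


/-- the list of numbers of children of the internal vertices of b -/
def childCounts : PTree → List ℕ
  | node ts => if ts.isEmpty then [] else ts.length :: (ts.attach.map fun t => childCounts t.1).flatten
decreasing_by simp only [PTree.node.sizeOf_spec]; have := List.sizeOf_lt_of_mem t.2; omega


mutual
/-- graft trees from the list E onto the successive leaves of b (left to right);
returns the grafted tree together with the unused suffix of E. -/
def graft : PTree → List PTree → PTree × List PTree
  | node ts, E =>
    if ts.isEmpty then (E.headI, E.tail)
    else
      let p := graftL ts E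
      (node p.1, p.2)
/-- graft trees from the list E onto the leaves of the forest l -/
def graftL : List PTree → List PTree → List PTree × List PTree
  | [], E => ([], E)
  | t :: ts, E =>
    let p := graft t E
    let q := graftL ts p.2
    (p.1 :: q.1, q.2)
end

/-- E ∝ b : graft the tuple E onto the leaves of b -/
def graftT (b : PTree) (E : List PTree) : PTree := (b.graft E).1

mutual
/-- the list of all decompositions b = E ∝ c, as pairs (c, E) -/
def decomps : PTree → List (PTree × List PTree)
  | node ts =>
    (leaf, [node ts]) ::
      (if ts.isEmpty then []
       else (decompsL ts).map fun p => (node p.1, p.2))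
/-- decompositions of a forest: pairs (list of bases, concatenated grafted tuples) -/
def decompsL : List PTree → List (List PTree × List PTree)
  | [] => [([], [])]
  | t :: ts =>
    (decomps t).flatMap fun p => (decompsL ts).map fun q => (p.1 :: q.1, p.2 ++ q.2)
end

theorem leaves_pos : ∀ b : PTree, 0 < b.leaves
  | node ts => by
    show 0 < leaves (node ts)
    unfold leaves
    split
    · exact one_pos
    · rename_i h
      have hne : ts ≠ [] := by simpa [List.isEmpty_iff] using h
      obtain ⟨t, ts', rfl⟩ := List.exists_cons_of_ne_nil hne
      have := leaves_pos t
      simp only [List.attach_cons, List.map_cons, List.sum_cons]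
      positivity

end PTree

open TensorProduct

/-- non-degenerate planar trees -/
def NDTree := {b : PTree // b.ND}

/-- the tensor algebra ℱ over the span 𝒜 of non-degenerate planar trees -/
abbrev TA := TensorAlgebra ℝ (NDTree →₀ ℝ)

open scoped Classical in
/-- a non-degenerate planar tree seen as an element of ℱ -/
noncomputable def iotaT (t : PTree) : TA :=
  if h : t.ND then TensorAlgebra.ι ℝ (Finsupp.single (⟨t, h⟩ : NDTree) (1 : ℝ)) else 0

/-- the coproduct ϖ : ℱ → ℱ ⊗ ℱ, ϖ(b) = Σ_{E ∝ c = b} (E₁ • ⋯ • E_k) ⊗ c -/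
noncomputable def cop : TA →ₐ[ℝ] TA ⊗[ℝ] TA :=
  TensorAlgebra.lift ℝ
    ((Finsupp.lift (TA ⊗[ℝ] TA) ℝ NDTree) fun b =>
      ((PTree.decomps b.1).map fun p => ((p.2.map iotaT).prod) ⊗ₜ[ℝ] iotaT p.1).sum)

/-- B₋ : sends ∘ to 0 and B₊(b₁,…,b_m) to b₁ • ⋯ • b_m -/
noncomputable def Bminus : PTree → TA
  | PTree.node ts => if ts.isEmpty then 0 else (ts.map iotaT).prod

/-- isomorphism of rooted trees (forgetting the planar order) -/
def RIso : PTree → PTree → Prop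
  | .node ts, .node ss =>
    ∃ e : Fin ts.length ≃ Fin ss.length, ∀ i : Fin ts.length, RIso (ts.get i) (ss.get (e i))
termination_by b _ => sizeOf b
decreasing_by
  simp only [PTree.node.sizeOf_spec]
  have h : sizeOf (ts.get i) < sizeOf ts :=
    List.sizeOf_lt_of_mem (by exact ts.get_mem i)
  omega

open Matrix in
/-- the solution of −y′ = A*y with y(0) = y⁰ -/
noncomputable def adjSol {n : ℕ} (A : Matrix (Fin n) (Fin n) ℝ) (y0 : Fin n → ℝ) (t : ℝ) :
    Fin n → ℝ := (NormedSpace.exp ((-t) • Aᵀ)) *ᵥ y0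


/-- ϖ ∘ B₊ = (id ⊗ B₊) ∘ ϖ + B₊ ⊗ ∘, i.e. for non-degenerate b₁,…,b_r
(r ≥ 2), ϖ(B₊(b₁,…,b_r)) = Σ (E ⊗ B₊(c₁,…,c_r)) + B₊(b₁,…,b_r) ⊗ ∘, the sum being over
all decompositions bᵢ = Eᵢ ∝ cᵢ of the factors of b₁ • ⋯ • b_r. -/
theorem cop_comp_Bplus (ts : List PTree) (h2 : 2 ≤ ts.length) (hts : ∀ t ∈ ts, t.ND) :
    cop (iotaT (PTree.node ts)) =
      ((PTree.decompsL ts).map fun p =>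
          ((p.2.map iotaT).prod) ⊗ₜ[ℝ] iotaT (PTree.node p.1)).sum
        + iotaT (PTree.node ts) ⊗ₜ[ℝ] iotaT PTree.leaf := by
  have hne : ts.isEmpty = false := by
    cases ts with
    | nil => simp at h2
    | cons a l => simp
  have hnd : (PTree.node ts).ND := by
    rw [PTree.ND]
    exact Or.inr ⟨h2, fun t _ => hts t.1 t.2⟩
  have hio : iotaT (PTree.node ts) = TensorAlgebra.ι ℝ (M := NDTree →₀ ℝ)
      (Finsupp.single (⟨PTree.node ts, hnd⟩ : NDTree) 1) := by
    rw [iotaT]; exact dif_pos hnd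
  rw [hio, cop]
  erw [TensorAlgebra.lift_ι_apply]
  rw [Finsupp.lift_apply]; erw [Finsupp.sum_single_index (by simp)]
  rw [one_smul, PTree.decomps, hne, if_neg Bool.false_ne_true]
  simp only [List.map_cons, List.sum_cons, List.map_map, Function.comp_def, List.map_nil,
    List.prod_cons, List.prod_nil, mul_one]
  rw [hio, add_comm]
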